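/- Let (a_k)_{k≥1} be a square-summable sequence of complex numbers and for n ≥ 1 set ξ_n := ∑_{k≥1, k≠2n} a_k²·( 1/(2n+k) + 1/(2n−k) − 1/n ) (an absolutely convergent series). Then for every p > 1: ∑_{n=1}^∞ |ξ_n|^p < ∞, and moreover ∑_{n=1}^∞ |ξ_n| / (log(n+1))^p < ∞. -/
import Mathlib


open Set

/-- Term of the series `ξ_n = ∑_{k≥1, k≠2n} a_k² (1/(2n+k) + 1/(2n−k) − 1/n)`. -/
noncomputable def xiTerm (a : ℕ → ℂ) (n k : ℕ) : ℂ :=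
  if k = 0 ∨ k = 2 * n then 0
  else (a k) ^ 2 * (1 / (2 * (n:ℂ) + k) + 1 / (2 * (n:ℂ) - k) - 1 / (n:ℂ))

/-- `ξ_n = ∑_{k≥1, k≠2n} a_k² (1/(2n+k) + 1/(2n−k) − 1/n)`. -/
noncomputable def xiSeq (a : ℕ → ℂ) (n : ℕ) : ℂ := ∑' k : ℕ, xiTerm a n k

/-! ### Auxiliary majorant -/

/-- Majorant coefficient: `1/(2n+k) + 1/|2n-k| + 1/n` (with `1/0 = 0` conventions). -/
noncomputable def vv (n k : ℕ) : ℝ :=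
  (2 * (n:ℝ) + k)⁻¹ + (((2 * (n:ℤ) - k).natAbs : ℝ))⁻¹ + ((n:ℝ))⁻¹

lemma nat_inv_le_one (m : ℕ) : ((m:ℝ))⁻¹ ≤ 1 := by
  rcases Nat.eq_zero_or_pos m with h | h
  · simp [h]
  · rw [inv_le_one_iff₀]; right; exact_mod_cast h

lemma vv_nonneg (n k : ℕ) : 0 ≤ vv n k := by
  unfold vv; positivity

lemma vv_le_three (n k : ℕ) (hn : 1 ≤ n) : vv n k ≤ 3 := by
  unfold vv
  have h1 : (2 * (n:ℝ) + k)⁻¹ ≤ 1 := by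
    rw [inv_le_one_iff₀]; right
    have h : (1:ℝ) ≤ (n:ℝ) := by exact_mod_cast hn
    have h' : (0:ℝ) ≤ (k:ℝ) := by positivity
    linarith
  have h2 := nat_inv_le_one ((2 * (n:ℤ) - k).natAbs)
  have h3 : ((n:ℝ))⁻¹ ≤ 1 := by
    rw [inv_le_one_iff₀]; right; exact_mod_cast hn
  linarith

lemma norm_xiTerm_le (a : ℕ → ℂ) (n k : ℕ) :
    ‖xiTerm a n k‖ ≤ ‖a k‖ ^ 2 * vv n k := by
  unfold xiTerm vv
  by_cases h : k = 0 ∨ k = 2*n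
  · rw [if_pos h, norm_zero]
    positivity
  · rw [if_neg h, norm_mul, norm_pow]
    apply mul_le_mul_of_nonneg_left _ (by positivity)
    have e1 : ‖1 / (2 * (n:ℂ) + k)‖ = (2 * (n:ℝ) + k)⁻¹ := by
      rw [norm_div, norm_one, one_div]
      congr 1
      rw [show 2 * (n:ℂ) + k = (((2 * (n:ℝ) + k) : ℝ) : ℂ) by push_cast; ring,
        Complex.norm_real, Real.norm_of_nonneg (by positivity)]
    have e2 : ‖1 / (2 * (n:ℂ) - k)‖ = (((2 * (n:ℤ) - k).natAbs : ℝ))⁻¹ := by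
      rw [norm_div, norm_one, one_div]
      congr 1
      rw [show 2 * (n:ℂ) - k = (((2 * (n:ℤ) - k) : ℤ) : ℂ) by push_cast; ring]
      rw [Complex.norm_intCast]
      rw [Nat.cast_natAbs]
      norm_cast
    have e3 : ‖1 / ((n:ℂ))‖ = ((n:ℝ))⁻¹ := by
      rw [norm_div, norm_one, one_div, Complex.norm_natCast]
    calc ‖1 / (2 * (n:ℂ) + k) + 1 / (2 * (n:ℂ) - k) - 1 / (n:ℂ)‖
        ≤ ‖1 / (2 * (n:ℂ) + k) + 1 / (2 * (n:ℂ) - k)‖ + ‖1 / ((n:ℂ))‖ := norm_sub_le _ _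
      _ ≤ ‖1 / (2 * (n:ℂ) + k)‖ + ‖1 / (2 * (n:ℂ) - k)‖ + ‖1 / ((n:ℂ))‖ := by
          gcongr; exact norm_add_le _ _
      _ = _ := by rw [e1, e2, e3]

lemma summable_bvv (a : ℕ → ℂ) (ha : Summable (fun k : ℕ => ‖a k‖ ^ 2))
    (n : ℕ) (hn : 1 ≤ n) : Summable (fun k : ℕ => ‖a k‖ ^ 2 * vv n k) := by
  refine Summable.of_nonneg_of_le (fun k => mul_nonneg (by positivity) (vv_nonneg n k))
    (fun k => mul_le_mul_of_nonneg_left (vv_le_three n k hn) (by positivity))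
    (ha.mul_right 3)

lemma summable_norm_xiTerm (a : ℕ → ℂ) (ha : Summable (fun k : ℕ => ‖a k‖ ^ 2))
    (n : ℕ) (hn : 1 ≤ n) : Summable (fun k : ℕ => ‖xiTerm a n k‖) :=
  Summable.of_nonneg_of_le (fun k => norm_nonneg _) (fun k => norm_xiTerm_le a n k)
    (summable_bvv a ha n hn)

lemma norm_xiSeq_le (a : ℕ → ℂ) (ha : Summable (fun k : ℕ => ‖a k‖ ^ 2))
    (n : ℕ) (hn : 1 ≤ n) : ‖xiSeq a n‖ ≤ ∑' k, ‖a k‖ ^ 2 * vv n k := by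
  calc ‖xiSeq a n‖ ≤ ∑' k, ‖xiTerm a n k‖ :=
        norm_tsum_le_tsum_norm (summable_norm_xiTerm a ha n hn)
    _ ≤ _ := Summable.tsum_le_tsum (fun k => norm_xiTerm_le a n k)
        (summable_norm_xiTerm a ha n hn) (summable_bvv a ha n hn)

/-! ### Hölder inequality for series -/

lemma holder_tsum {b v : ℕ → ℝ} {p : ℝ} (hp : 1 < p)
    (hb0 : ∀ k, 0 ≤ b k) (hv0 : ∀ k, 0 ≤ v k)
    (hb : Summable b) (hbv : Summable (fun k => b k * v k))
    (hbvp : Summable (fun k => b k * v k ^ p)) :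
    (∑' k, b k * v k) ^ p ≤ (∑' k, b k) ^ (p - 1) * ∑' k, b k * v k ^ p := by
  have hp0 : (0:ℝ) < p := by linarith
  set A := ∑' k, b k with hAdef
  set B := ∑' k, b k * v k ^ p with hBdef
  have hA : 0 ≤ A := tsum_nonneg (fun k => hb0 k)
  have hB : 0 ≤ B := tsum_nonneg (fun k => mul_nonneg (hb0 k) (Real.rpow_nonneg (hv0 k) p))
  have key : ∑' k, b k * v k ≤ A ^ (1 - p⁻¹) * B ^ p⁻¹ := by
    apply Summable.tsum_le_of_sum_le hbv
    intro s
    calc ∑ k ∈ s, b k * v k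
        ≤ (∑ k ∈ s, b k) ^ (1 - p⁻¹) * (∑ k ∈ s, b k * v k ^ p) ^ p⁻¹ :=
          Real.inner_le_weight_mul_Lp_of_nonneg s hp.le _ _ hb0 hv0
      _ ≤ A ^ (1 - p⁻¹) * B ^ p⁻¹ := by
          have h1 : ∑ k ∈ s, b k ≤ A := Summable.sum_le_tsum s (fun k _ => hb0 k) hb
          have h2 : ∑ k ∈ s, b k * v k ^ p ≤ B :=
            Summable.sum_le_tsum s (fun k _ => mul_nonneg (hb0 k) (Real.rpow_nonneg (hv0 k) p)) hbvp
          have e1 : (0:ℝ) ≤ 1 - p⁻¹ := by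
            rw [sub_nonneg]
            exact inv_le_one_of_one_le₀ hp.le
          have e2 : (0:ℝ) ≤ ∑ k ∈ s, b k := Finset.sum_nonneg (fun k _ => hb0 k)
          have e3 : (0:ℝ) ≤ ∑ k ∈ s, b k * v k ^ p :=
            Finset.sum_nonneg (fun k _ => mul_nonneg (hb0 k) (Real.rpow_nonneg (hv0 k) p))
          exact mul_le_mul (Real.rpow_le_rpow e2 h1 e1) (Real.rpow_le_rpow e3 h2 (by positivity))
            (Real.rpow_nonneg e3 _) (Real.rpow_nonneg hA _)
  have h0 : 0 ≤ ∑' k, b k * v k := tsum_nonneg (fun k => mul_nonneg (hb0 k) (hv0 k))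
  calc (∑' k, b k * v k) ^ p ≤ (A ^ (1 - p⁻¹) * B ^ p⁻¹) ^ p :=
        Real.rpow_le_rpow h0 key hp0.le
    _ = A ^ (p - 1) * B := by
        rw [Real.mul_rpow (Real.rpow_nonneg hA _) (Real.rpow_nonneg hB _),
          ← Real.rpow_mul hA, ← Real.rpow_mul hB]
        have h : (1 - p⁻¹) * p = p - 1 := by field_simp
        rw [h, inv_mul_cancel₀ hp0.ne', Real.rpow_one]

lemma rpow_add3_le {x y z p : ℝ} (hx : 0 ≤ x) (hy : 0 ≤ y) (hz : 0 ≤ z) (hp : 0 ≤ p) :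
    (x + y + z) ^ p ≤ 3 ^ p * (x ^ p + y ^ p + z ^ p) := by
  set M := max x (max y z) with hMdef
  have hMx : x ≤ M := le_max_left _ _
  have hMy : y ≤ M := (le_max_left y z).trans (le_max_right _ _)
  have hMz : z ≤ M := (le_max_right y z).trans (le_max_right _ _)
  have hM : 0 ≤ M := hx.trans hMx
  have h2 : M ^ p ≤ x ^ p + y ^ p + z ^ p := by
    have px : 0 ≤ x ^ p := Real.rpow_nonneg hx p
    have py : 0 ≤ y ^ p := Real.rpow_nonneg hy p
    have pz : 0 ≤ z ^ p := Real.rpow_nonneg hz p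
    rcases max_cases x (max y z) with ⟨h, -⟩ | ⟨h, -⟩
    · rw [hMdef, h]; linarith
    · rcases max_cases y z with ⟨h', -⟩ | ⟨h', -⟩ <;> rw [hMdef, h, h'] <;> linarith
  calc (x + y + z) ^ p ≤ (3 * M) ^ p := Real.rpow_le_rpow (by positivity) (by linarith) hp
    _ = 3 ^ p * M ^ p := Real.mul_rpow (by norm_num) hM
    _ ≤ 3 ^ p * (x ^ p + y ^ p + z ^ p) := by
        apply mul_le_mul_of_nonneg_left h2 (Real.rpow_nonneg (by norm_num) p)

/-! ### Core estimate A: `ℓ^p` bounds on the majorant, uniform in `k` -/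

lemma gK_summable {p : ℝ} (hp : 1 < p) : Summable (fun m : ℕ => ((m:ℝ)⁻¹) ^ p) := by
  refine ((Real.summable_one_div_nat_rpow (p := p)).2 hp).congr fun m => ?_
  rw [one_div, ← Real.inv_rpow (Nat.cast_nonneg m)]

lemma shiftK_summable {p : ℝ} (hp : 1 < p) :
    Summable (fun n : ℕ => (((n:ℝ)+1)⁻¹) ^ p) := by
  refine ((summable_nat_add_iff 1).2 (gK_summable hp)).congr fun n => ?_
  push_cast
  rfl

lemma sum_g_natAbs_le (g : ℕ → ℝ) (hg0 : ∀ m, 0 ≤ g m) (hg : Summable g) (k : ℕ)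
    (s : Finset ℕ) :
    ∑ n ∈ s, g ((2 * ((n:ℤ) + 1) - k).natAbs) ≤ 2 * ∑' m, g m := by
  classical
  set e : ℕ → ℕ := fun n => (2 * ((n:ℤ) + 1) - k).natAbs with he
  set P : ℕ → Prop := fun n => (k:ℤ) ≤ 2 * ((n:ℤ) + 1) with hP
  have key : ∀ t : Finset ℕ, (∀ x ∈ t, ∀ y ∈ t, e x = e y → x = y) →
      ∑ n ∈ t, g (e n) ≤ ∑' m, g m := by
    intro t ht
    rw [← Finset.sum_image ht]
    exact Summable.sum_le_tsum _ (fun m _ => hg0 m) hg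
  have hsplit := Finset.sum_filter_add_sum_filter_not s P (fun n => g (e n))
  have h1 : ∑ n ∈ s.filter P, g (e n) ≤ ∑' m, g m := by
    refine key _ fun x hx y hy hxy => ?_
    simp only [Finset.mem_filter, hP] at hx hy
    simp only [he] at hxy
    omega
  have h2 : ∑ n ∈ s.filter (fun n => ¬ P n), g (e n) ≤ ∑' m, g m := by
    refine key _ fun x hx y hy hxy => ?_
    simp only [Finset.mem_filter, hP] at hx hy
    simp only [he] at hxy
    omega
  calc ∑ n ∈ s, g (e n)
      = ∑ n ∈ s.filter P, g (e n)
        + ∑ n ∈ s.filter (fun n => ¬ P n), g (e n) := hsplit.symm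
    _ ≤ 2 * ∑' m, g m := by linarith

lemma vv_succ_eq (n k : ℕ) :
    vv (n+1) k = (2*((n:ℝ)+1)+k)⁻¹ + (((2 * ((n:ℤ)+1) - k).natAbs : ℝ))⁻¹ + ((n:ℝ)+1)⁻¹ := by
  unfold vv
  push_cast
  ring_nf

lemma vv_rpow_le {p : ℝ} (hp : 0 ≤ p) (n k : ℕ) :
    (vv (n+1) k) ^ p ≤
      3^p * (2 * ((((n:ℝ)+1)⁻¹)^p) + ((((2*((n:ℤ)+1) - k).natAbs : ℝ))⁻¹)^p) := by
  rw [vv_succ_eq]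
  have h3 := rpow_add3_le (x := (2*((n:ℝ)+1)+k)⁻¹)
    (y := (((2 * ((n:ℤ)+1) - k).natAbs : ℝ))⁻¹) (z := ((n:ℝ)+1)⁻¹)
    (by positivity) (by positivity) (by positivity) hp
  refine h3.trans ?_
  have hx : ((2*((n:ℝ)+1)+k)⁻¹)^p ≤ (((n:ℝ)+1)⁻¹)^p := by
    apply Real.rpow_le_rpow (by positivity) ?_ hp
    have hk : (0:ℝ) ≤ (k:ℝ) := Nat.cast_nonneg k
    have hn1 : (0:ℝ) < (n:ℝ)+1 := by positivity
    rw [inv_le_inv₀ (by linarith) hn1]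
    linarith
  have h3p : (0:ℝ) ≤ 3^p := Real.rpow_nonneg (by norm_num) p
  exact mul_le_mul_of_nonneg_left (by linarith) h3p

lemma coreA {p : ℝ} (hp : 1 < p) : ∃ K : ℝ, ∀ k N : ℕ,
    ∑ n ∈ Finset.range N, (vv (n+1) k) ^ p ≤ K := by
  have hp0 : (0:ℝ) ≤ p := by linarith
  refine ⟨3^p * (2 * (∑' n : ℕ, (((n:ℝ)+1)⁻¹) ^ p) + 2 * (∑' m : ℕ, ((m:ℝ)⁻¹) ^ p)),
    fun k N => ?_⟩
  have hA : ∑ n ∈ Finset.range N, (((n:ℝ)+1)⁻¹)^p ≤ ∑' n : ℕ, (((n:ℝ)+1)⁻¹) ^ p :=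
    Summable.sum_le_tsum _ (fun n _ => by positivity) (shiftK_summable hp)
  have hG : ∑ n ∈ Finset.range N, ((((2*((n:ℤ)+1) - k).natAbs : ℝ))⁻¹)^p
      ≤ 2 * ∑' m : ℕ, ((m:ℝ)⁻¹) ^ p := by
    exact sum_g_natAbs_le (fun m => ((m:ℝ)⁻¹)^p) (fun m => by positivity)
      (gK_summable hp) k (Finset.range N)
  have h3p : (0:ℝ) ≤ 3^p := Real.rpow_nonneg (by norm_num) p
  calc ∑ n ∈ Finset.range N, (vv (n+1) k) ^ p
      ≤ ∑ n ∈ Finset.range N,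
          3^p * (2 * ((((n:ℝ)+1)⁻¹)^p) + ((((2*((n:ℤ)+1) - k).natAbs : ℝ))⁻¹)^p) :=
        Finset.sum_le_sum fun n _ => vv_rpow_le hp0 n k
    _ = 3^p * (2 * (∑ n ∈ Finset.range N, (((n:ℝ)+1)⁻¹)^p)
          + ∑ n ∈ Finset.range N, ((((2*((n:ℤ)+1) - k).natAbs : ℝ))⁻¹)^p) := by
        simp only [mul_add, Finset.mul_sum, Finset.sum_add_distrib]
    _ ≤ _ := by
        apply mul_le_mul_of_nonneg_left _ h3p
        linarith

/-! ### Core estimate B: weighted `ℓ^1` bounds on the majorant, uniform in `k` -/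

lemma bertrand_summable {p : ℝ} (hp : 1 < p) :
    Summable (fun n : ℕ => (((n:ℝ)+1) * Real.log ((n:ℝ)+2) ^ p)⁻¹) := by
  have hlog2 : (0:ℝ) < Real.log 2 := Real.log_pos (by norm_num)
  set f : ℕ → ℝ := fun m => ((m:ℝ) * Real.log ((m:ℝ)+1) ^ p)⁻¹ with hf
  have hL : ∀ m : ℕ, 0 ≤ Real.log ((m:ℝ)+1) := fun m =>
    Real.log_nonneg (by linarith [Nat.cast_nonneg (α := ℝ) m])
  have hnonneg : ∀ m, 0 ≤ f m := by
    intro m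
    exact inv_nonneg.2 (mul_nonneg (Nat.cast_nonneg m) (Real.rpow_nonneg (hL m) p))
  have hmono : ∀ ⦃m n : ℕ⦄, 0 < m → m ≤ n → f n ≤ f m := by
    intro m n hm hmn
    have hm1 : (1:ℝ) ≤ (m:ℝ) := by exact_mod_cast hm
    have hmn' : (m:ℝ) ≤ (n:ℝ) := by exact_mod_cast hmn
    have hLm : 0 < Real.log ((m:ℝ)+1) := Real.log_pos (by linarith)
    have hpos : 0 < (m:ℝ) * Real.log ((m:ℝ)+1) ^ p := by
      apply mul_pos (by linarith) (Real.rpow_pos_of_pos hLm p)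
    have hle : (m:ℝ) * Real.log ((m:ℝ)+1) ^ p ≤ (n:ℝ) * Real.log ((n:ℝ)+1) ^ p := by
      apply mul_le_mul hmn' ?_ (Real.rpow_nonneg (hL m) p) (by linarith)
      exact Real.rpow_le_rpow (hL m) (Real.log_le_log (by linarith) (by linarith)) (by linarith)
    simp only [hf]
    rw [inv_le_inv₀ (lt_of_lt_of_le hpos hle) hpos]
    exact hle
  have hcond : Summable (fun k : ℕ => (2:ℝ)^k * f (2^k)) := by
    have heq : ∀ k : ℕ, (2:ℝ)^k * f (2^k) = (Real.log (((2:ℝ))^k+1) ^ p)⁻¹ := by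
      intro k
      have h2k : (0:ℝ) < (2:ℝ)^k := by positivity
      simp only [hf]
      push_cast
      rw [mul_inv, ← mul_assoc, mul_inv_cancel₀ (ne_of_gt h2k), one_mul]
    rw [funext heq]
    rw [← summable_nat_add_iff 1]
    refine Summable.of_nonneg_of_le
      (f := fun k : ℕ => ((Real.log 2)^p)⁻¹ * (((k:ℝ)+1)⁻¹)^p)
      (fun k => ?_) (fun k => ?_) ?_
    · have h0 : (0:ℝ) ≤ 2^(k+1) := by positivity
      exact inv_nonneg.2 (Real.rpow_nonneg (Real.log_nonneg (by linarith)) p)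
    · have h1 : ((k:ℝ)+1) * Real.log 2 ≤ Real.log ((2:ℝ)^(k+1)+1) := by
        have h : ((k:ℝ)+1) * Real.log 2 = Real.log ((2:ℝ)^(k+1)) := by
          rw [Real.log_pow]; push_cast; ring
        rw [h]
        apply Real.log_le_log (by positivity) (by linarith)
      have hk1 : (0:ℝ) < ((k:ℝ)+1) * Real.log 2 := by positivity
      have h2 : (((k:ℝ)+1) * Real.log 2) ^ p ≤ Real.log ((2:ℝ)^(k+1)+1) ^ p :=
        Real.rpow_le_rpow hk1.le h1 (by linarith)
      have hpow : (0:ℝ) < (((k:ℝ)+1) * Real.log 2) ^ p := Real.rpow_pos_of_pos hk1 p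
      have step : (Real.log ((2:ℝ)^(k+1)+1) ^ p)⁻¹ ≤ ((((k:ℝ)+1) * Real.log 2) ^ p)⁻¹ := by
        rw [inv_le_inv₀ (lt_of_lt_of_le hpow h2) hpow]
        exact h2
      refine step.trans (le_of_eq ?_)
      rw [Real.mul_rpow (by positivity) hlog2.le, mul_inv, ← Real.inv_rpow (by positivity)]
      ring
    · apply Summable.mul_left
      refine ((summable_nat_add_iff 1).2 (gK_summable hp)).congr fun n => ?_
      push_cast
      rfl
  have h := (summable_condensed_iff_of_nonneg hnonneg hmono).1 hcond
  refine ((summable_nat_add_iff 1).2 h).congr fun n => ?_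
  simp only [hf]
  push_cast
  have e : ((n:ℝ)+1)+1 = (n:ℝ)+2 := by ring
  rw [e]

lemma sum_inv_natAbs_middle (k : ℕ) (s : Finset ℕ) (hs : ∀ n ∈ s, n + 1 < k) :
    ∑ n ∈ s, ((((2 * ((n:ℤ)+1) - k).natAbs : ℝ))⁻¹) ≤ 2 * (1 + Real.log k) := by
  classical
  set e : ℕ → ℕ := fun n => (2 * ((n:ℤ) + 1) - k).natAbs with he
  have hharm : ∑ m ∈ Finset.range (k+1), ((m:ℝ))⁻¹ ≤ 1 + Real.log k := by
    have h1 : ∑ m ∈ Finset.range (k+1), ((m:ℝ))⁻¹ = (harmonic k : ℝ) := by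
      rw [Finset.sum_range_succ']
      simp only [Nat.cast_zero, inv_zero, add_zero, harmonic]
      push_cast
      rfl
    rw [h1]
    exact_mod_cast harmonic_le_one_add_log k
  have key : ∀ t : Finset ℕ, (∀ x ∈ t, ∀ y ∈ t, e x = e y → x = y) →
      (∀ x ∈ t, e x ≤ k) →
      ∑ n ∈ t, ((e n : ℝ))⁻¹ ≤ 1 + Real.log k := by
    intro t ht hbd
    have himg : ∑ n ∈ t, ((e n : ℝ))⁻¹ = ∑ m ∈ t.image e, ((m:ℝ))⁻¹ :=
      (Finset.sum_image (f := fun m : ℕ => ((m:ℝ))⁻¹) ht).symm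
    rw [himg]
    refine le_trans (Finset.sum_le_sum_of_subset_of_nonneg ?_ ?_) hharm
    · intro m hm
      simp only [Finset.mem_image] at hm
      obtain ⟨x, hx, rfl⟩ := hm
      exact Finset.mem_range.2 (Nat.lt_succ_of_le (hbd x hx))
    · intro m _ _
      positivity
  set P : ℕ → Prop := fun n => (k:ℤ) ≤ 2 * ((n:ℤ) + 1) with hP
  have hsplit := Finset.sum_filter_add_sum_filter_not s P (fun n => ((e n : ℝ))⁻¹)
  have h1 : ∑ n ∈ s.filter P, ((e n : ℝ))⁻¹ ≤ 1 + Real.log k := by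
    refine key _ (fun x hx y hy hxy => ?_) (fun x hx => ?_)
    · simp only [Finset.mem_filter, hP] at hx hy
      simp only [he] at hxy
      omega
    · simp only [Finset.mem_filter, hP] at hx
      have := hs x hx.1
      simp only [he]
      omega
  have h2 : ∑ n ∈ s.filter (fun n => ¬ P n), ((e n : ℝ))⁻¹ ≤ 1 + Real.log k := by
    refine key _ (fun x hx y hy hxy => ?_) (fun x hx => ?_)
    · simp only [Finset.mem_filter, hP] at hx hy
      simp only [he] at hxy
      omega
    · simp only [Finset.mem_filter, hP] at hx
      have := hs x hx.1
      simp only [he]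
      omega
  calc ∑ n ∈ s, ((e n : ℝ))⁻¹
      = ∑ n ∈ s.filter P, ((e n : ℝ))⁻¹
        + ∑ n ∈ s.filter (fun n => ¬ P n), ((e n : ℝ))⁻¹ := hsplit.symm
    _ ≤ 2 * (1 + Real.log k) := by linarith

lemma ratio_bound {p : ℝ} (hp : 1 < p) : ∃ C : ℝ, 0 ≤ C ∧ ∀ k : ℕ,
    2 * (1 + Real.log k) ≤ C * (Real.log ((k:ℝ)+2) / 3) ^ p := by
  have hlog2 : (0:ℝ) < Real.log 2 := Real.log_pos (by norm_num)
  refine ⟨2 * (1 + (Real.log 2)⁻¹) * (Real.log 2) ^ (1 - p) * 3 ^ p, by positivity, fun k => ?_⟩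
  set x := Real.log ((k:ℝ)+2) with hx
  have hxlog2 : Real.log 2 ≤ x := by
    apply Real.log_le_log (by norm_num)
    have : (0:ℝ) ≤ (k:ℝ) := Nat.cast_nonneg k
    linarith
  have hxpos : 0 < x := lt_of_lt_of_le hlog2 hxlog2
  have hnum : Real.log k ≤ x := by
    rcases Nat.eq_zero_or_pos k with h | h
    · subst h; simp [hx]; positivity
    · apply Real.log_le_log (by exact_mod_cast h)
      have : (0:ℝ) ≤ (k:ℝ) := Nat.cast_nonneg k
      linarith
  have h1 : 1 + x ≤ (1 + (Real.log 2)⁻¹) * x := by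
    have : 1 ≤ (Real.log 2)⁻¹ * x := by
      rw [← div_eq_inv_mul, le_div_iff₀ hlog2]
      linarith
    nlinarith
  have h2 : x ≤ (Real.log 2) ^ (1 - p) * x ^ p := by
    have e2 : x ^ (1 - p) ≤ (Real.log 2) ^ (1 - p) :=
      Real.rpow_le_rpow_of_nonpos hlog2 hxlog2 (by linarith)
    calc x = x ^ (1 - p) * x ^ p := by rw [← Real.rpow_add hxpos]; norm_num
      _ ≤ _ := mul_le_mul_of_nonneg_right e2 (Real.rpow_nonneg hxpos.le p)
  have hdiv : (x / 3) ^ p = x ^ p / 3 ^ p := Real.div_rpow hxpos.le (by norm_num) p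
  rw [hdiv]
  have h3p : (0:ℝ) < 3 ^ p := Real.rpow_pos_of_pos (by norm_num) p
  have e3 : 2 * (1 + (Real.log 2)⁻¹) * (Real.log 2) ^ (1 - p) * 3 ^ p * (x ^ p / 3 ^ p)
      = 2 * ((1 + (Real.log 2)⁻¹) * ((Real.log 2) ^ (1 - p) * x ^ p)) := by
    field_simp
  rw [e3]
  have hc2 : (0:ℝ) ≤ 1 + (Real.log 2)⁻¹ := by positivity
  calc 2 * (1 + Real.log k) ≤ 2 * (1 + x) := by linarith
    _ ≤ 2 * ((1 + (Real.log 2)⁻¹) * x) := by linarith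
    _ ≤ 2 * ((1 + (Real.log 2)⁻¹) * ((Real.log 2) ^ (1 - p) * x ^ p)) := by
        apply mul_le_mul_of_nonneg_left (mul_le_mul_of_nonneg_left h2 hc2) (by norm_num)

lemma coreB {p : ℝ} (hp : 1 < p) : ∃ K : ℝ, ∀ k N : ℕ,
    ∑ n ∈ Finset.range N, vv (n+1) k / Real.log ((n:ℝ)+2) ^ p ≤ K := by
  classical
  have hlog2 : (0:ℝ) < Real.log 2 := Real.log_pos (by norm_num)
  set L : ℕ → ℝ := fun n => Real.log ((n:ℝ)+2) ^ p with hLdef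
  have hlogn : ∀ n : ℕ, Real.log 2 ≤ Real.log ((n:ℝ)+2) := fun n =>
    Real.log_le_log (by norm_num) (by linarith [Nat.cast_nonneg (α := ℝ) n])
  have hLpos : ∀ n : ℕ, 0 < L n := fun n =>
    Real.rpow_pos_of_pos (lt_of_lt_of_le hlog2 (hlogn n)) p
  set zL : ℕ → ℝ := fun n => (((n:ℝ)+1) * L n)⁻¹ with hzLdef
  have hzL0 : ∀ n, 0 ≤ zL n := fun n =>
    inv_nonneg.2 (mul_nonneg (by positivity) (hLpos n).le)
  have hzLsum : Summable zL := bertrand_summable hp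
  set KB : ℝ := ∑' n, zL n with hKB
  obtain ⟨C, hC0, hC⟩ := ratio_bound hp
  refine ⟨3 * KB + C, fun k N => ?_⟩
  set y : ℕ → ℝ := fun n => (((2 * ((n:ℤ)+1) - k).natAbs : ℝ))⁻¹ with hy
  have hy0 : ∀ n, 0 ≤ y n := fun n => by positivity
  have hzLe : ∀ N', ∑ n ∈ Finset.range N', zL n ≤ KB := fun N' =>
    Summable.sum_le_tsum _ (fun n _ => hzL0 n) hzLsum
  have hzeq : ∀ n : ℕ, (((n:ℝ)+1)⁻¹) / L n = zL n := by
    intro n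
    rw [div_eq_mul_inv, ← mul_inv]
  have hxz : ∀ n : ℕ, vv (n+1) k / L n ≤ 2 * zL n + y n / L n := by
    intro n
    rw [vv_succ_eq]
    have hxle : ((2*((n:ℝ)+1)+k)⁻¹) / L n ≤ zL n := by
      rw [← hzeq n]
      apply div_le_div_of_nonneg_right ?_ (hLpos n).le
      rw [inv_le_inv₀ (by positivity) (by positivity)]
      linarith [Nat.cast_nonneg (α := ℝ) k, Nat.cast_nonneg (α := ℝ) n]
    have hsplit3 : (((2*((n:ℝ)+1)+k)⁻¹) + y n + ((n:ℝ)+1)⁻¹) / L n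
        = ((2*((n:ℝ)+1)+k)⁻¹) / L n + y n / L n + (((n:ℝ)+1)⁻¹) / L n := by
      ring
    rw [hy] at hsplit3
    rw [hsplit3, hzeq n]
    linarith [hxle]
  set Q : ℕ → Prop := fun n => n + 1 < k ∧ k < 4 * (n + 1) with hQ
  have hmidL : ∀ n : ℕ, Q n → (Real.log ((k:ℝ)+2) / 3) ^ p ≤ L n := by
    intro n hn
    have hk3 : k ≤ 4*n + 3 := by omega
    have hk4 : (k:ℝ) + 2 ≤ ((n:ℝ)+2)^(3:ℕ) := by
      have h1 : (k:ℝ) ≤ 4*(n:ℝ) + 3 := by exact_mod_cast hk3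
      have hnn : (0:ℝ) ≤ (n:ℝ) := Nat.cast_nonneg n
      nlinarith [hnn, mul_nonneg hnn hnn, mul_nonneg (mul_nonneg hnn hnn) hnn]
    have hlogk : Real.log ((k:ℝ)+2) / 3 ≤ Real.log ((n:ℝ)+2) := by
      have h2 : Real.log ((k:ℝ)+2) ≤ 3 * Real.log ((n:ℝ)+2) := by
        calc Real.log ((k:ℝ)+2) ≤ Real.log (((n:ℝ)+2)^(3:ℕ)) :=
              Real.log_le_log (by positivity) hk4
          _ = 3 * Real.log ((n:ℝ)+2) := by rw [Real.log_pow]; norm_num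
      linarith
    apply Real.rpow_le_rpow ?_ hlogk (by linarith)
    have := hlogn k
    linarith
  have hsplit := Finset.sum_filter_add_sum_filter_not (Finset.range N) Q (fun n => y n / L n)
  have hQ1 : ∑ n ∈ (Finset.range N).filter Q, y n / L n ≤ C := by
    set Lk : ℝ := (Real.log ((k:ℝ)+2) / 3) ^ p with hLk
    have hLkpos : 0 < Lk :=
      Real.rpow_pos_of_pos (div_pos (lt_of_lt_of_le hlog2 (hlogn k)) (by norm_num)) p
    have step1 : ∀ n ∈ (Finset.range N).filter Q, y n / L n ≤ y n / Lk := by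
      intro n hn
      simp only [Finset.mem_filter] at hn
      have := hmidL n hn.2
      gcongr
    have hnum : ∑ n ∈ (Finset.range N).filter Q, y n ≤ 2 * (1 + Real.log k) := by
      apply sum_inv_natAbs_middle k _ fun n hn => ?_
      simp only [Finset.mem_filter, hQ] at hn
      exact hn.2.1
    calc ∑ n ∈ (Finset.range N).filter Q, y n / L n
        ≤ ∑ n ∈ (Finset.range N).filter Q, y n / Lk := Finset.sum_le_sum step1
      _ = (∑ n ∈ (Finset.range N).filter Q, y n) / Lk := by rw [Finset.sum_div]
      _ ≤ (2 * (1 + Real.log k)) / Lk := by gcongr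
      _ ≤ C := by rw [div_le_iff₀ hLkpos]; exact hC k
  have hQ2 : ∑ n ∈ (Finset.range N).filter (fun n => ¬ Q n), y n / L n
      ≤ ∑ n ∈ Finset.range N, zL n := by
    refine le_trans (Finset.sum_le_sum ?_) (Finset.sum_le_sum_of_subset_of_nonneg
      (Finset.filter_subset _ _) (fun n _ _ => hzL0 n))
    intro n hn
    simp only [Finset.mem_filter, hQ] at hn
    have hyz : y n ≤ ((n:ℝ)+1)⁻¹ := by
      have hd : n + 1 ≤ (2 * ((n:ℤ)+1) - k).natAbs := by omega
      have hd' : ((n:ℝ)+1) ≤ (((2 * ((n:ℤ)+1) - k).natAbs : ℝ)) := by exact_mod_cast hd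
      rw [hy]
      rw [inv_le_inv₀ (by linarith : (0:ℝ) < (((2 * ((n:ℤ)+1) - k).natAbs : ℝ))) (by positivity)]
      exact hd'
    rw [← hzeq n]
    exact div_le_div_of_nonneg_right hyz (hLpos n).le
  calc ∑ n ∈ Finset.range N, vv (n+1) k / L n
      ≤ ∑ n ∈ Finset.range N, (2 * zL n + y n / L n) := Finset.sum_le_sum fun n _ => hxz n
    _ = 2 * (∑ n ∈ Finset.range N, zL n) + ∑ n ∈ Finset.range N, y n / L n := by
        rw [Finset.sum_add_distrib, Finset.mul_sum]
    _ ≤ 3 * KB + C := by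
        have h1 := hzLe N
        have h2 : ∑ n ∈ Finset.range N, y n / L n ≤ C + ∑ n ∈ Finset.range N, zL n := by
          rw [← hsplit]
          linarith [hQ1, hQ2]
        linarith

/-! ### Main theorem -/

/-- **`ℓ_p` estimates for `ξ_n` with square-summable coefficients** (Proposition 3.7):
if `∑|a_k|² < ∞` then each `ξ_n` is given by an absolutely convergent series, and for
every `p > 1` one has `∑_n |ξ_n|^p < ∞` and `∑_n |ξ_n|/(log(n+1))^p < ∞`. -/
theorem xi_estimates_l2_coefficients
    (a : ℕ → ℂ) (ha : Summable (fun k : ℕ => ‖a k‖ ^ 2)) :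
    (∀ n : ℕ, 1 ≤ n → Summable (fun k : ℕ => ‖xiTerm a n k‖)) ∧
    ∀ p : ℝ, 1 < p →
      Summable (fun n : ℕ => ‖xiSeq a (n + 1)‖ ^ p) ∧
      Summable (fun n : ℕ => ‖xiSeq a (n + 1)‖ / Real.log ((n:ℝ) + 2) ^ p) := by
  have hb0 : ∀ k : ℕ, (0:ℝ) ≤ ‖a k‖ ^ 2 := fun k => by positivity
  refine ⟨summable_norm_xiTerm a ha, fun p hp => ?_⟩
  have hp0 : (0:ℝ) < p := by linarith
  have hT : ∀ n : ℕ, ‖xiSeq a (n+1)‖ ≤ ∑' k, ‖a k‖ ^ 2 * vv (n+1) k := fun n =>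
    norm_xiSeq_le a ha (n+1) (by omega)
  have hbvv : ∀ n : ℕ, Summable (fun k : ℕ => ‖a k‖ ^ 2 * vv (n+1) k) := fun n =>
    summable_bvv a ha (n+1) (by omega)
  constructor
  · -- ℓ^p estimate
    obtain ⟨K, hK⟩ := coreA hp
    have hvvp_le : ∀ n k' : ℕ, (vv (n+1) k')^p ≤ 3^p := fun n k' =>
      Real.rpow_le_rpow (vv_nonneg _ _) (vv_le_three _ _ (by omega)) (by linarith)
    have hDD : ∀ n : ℕ, Summable (fun k' : ℕ => ‖a k'‖ ^ 2 * (vv (n+1) k')^p) := fun n =>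
      Summable.of_nonneg_of_le
        (fun k' => mul_nonneg (hb0 k') (Real.rpow_nonneg (vv_nonneg _ _) p))
        (fun k' => mul_le_mul_of_nonneg_left (hvvp_le n k') (hb0 k'))
        (ha.mul_right (3^p))
    apply summable_of_sum_range_le
      (c := (∑' k', ‖a k'‖ ^ 2)^(p-1) * ((∑' k', ‖a k'‖ ^ 2) * K))
      (fun n => Real.rpow_nonneg (norm_nonneg _) p)
    intro N
    have step1 : ∀ n : ℕ, ‖xiSeq a (n+1)‖^p
        ≤ (∑' k', ‖a k'‖ ^ 2)^(p-1) * ∑' k', ‖a k'‖ ^ 2 * (vv (n+1) k')^p := by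
      intro n
      calc ‖xiSeq a (n+1)‖^p ≤ (∑' k', ‖a k'‖ ^ 2 * vv (n+1) k')^p :=
            Real.rpow_le_rpow (norm_nonneg _) (hT n) hp0.le
        _ ≤ _ := holder_tsum hp hb0 (fun k' => vv_nonneg _ _) ha (hbvv n) (hDD n)
    calc ∑ n ∈ Finset.range N, ‖xiSeq a (n+1)‖^p
        ≤ ∑ n ∈ Finset.range N,
            (∑' k', ‖a k'‖ ^ 2)^(p-1) * ∑' k', ‖a k'‖ ^ 2 * (vv (n+1) k')^p :=
          Finset.sum_le_sum fun n _ => step1 n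
      _ = (∑' k', ‖a k'‖ ^ 2)^(p-1)
            * ∑ n ∈ Finset.range N, ∑' k', ‖a k'‖ ^ 2 * (vv (n+1) k')^p := by
          rw [Finset.mul_sum]
      _ ≤ (∑' k', ‖a k'‖ ^ 2)^(p-1) * ((∑' k', ‖a k'‖ ^ 2) * K) := by
          apply mul_le_mul_of_nonneg_left ?_ (Real.rpow_nonneg (tsum_nonneg hb0) _)
          have hint : ∑ n ∈ Finset.range N, ∑' k', ‖a k'‖ ^ 2 * (vv (n+1) k')^p
              = ∑' k', ∑ n ∈ Finset.range N, ‖a k'‖ ^ 2 * (vv (n+1) k')^p :=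
            (Summable.tsum_finsetSum (fun n _ => hDD n)).symm
          rw [hint]
          have hle : ∀ k' : ℕ, ∑ n ∈ Finset.range N, ‖a k'‖ ^ 2 * (vv (n+1) k')^p
              ≤ ‖a k'‖ ^ 2 * K := by
            intro k'
            rw [← Finset.mul_sum]
            exact mul_le_mul_of_nonneg_left (hK k' N) (hb0 k')
          calc ∑' k', ∑ n ∈ Finset.range N, ‖a k'‖ ^ 2 * (vv (n+1) k')^p
              ≤ ∑' k', ‖a k'‖ ^ 2 * K :=
                Summable.tsum_le_tsum hle (summable_sum (fun n _ => hDD n)) (ha.mul_right K)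
            _ = (∑' k', ‖a k'‖ ^ 2) * K := tsum_mul_right
  · -- weighted ℓ^1 estimate
    obtain ⟨K, hK⟩ := coreB hp
    have hlogn : ∀ n : ℕ, (0:ℝ) ≤ Real.log ((n:ℝ)+2) := fun n =>
      Real.log_nonneg (by linarith [Nat.cast_nonneg (α := ℝ) n])
    have hLpos : ∀ n : ℕ, (0:ℝ) < Real.log ((n:ℝ)+2) ^ p := fun n =>
      Real.rpow_pos_of_pos (Real.log_pos (by linarith [Nat.cast_nonneg (α := ℝ) n])) p
    apply summable_of_sum_range_le (c := (∑' k', ‖a k'‖ ^ 2) * K)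
      (fun n => div_nonneg (norm_nonneg _) (Real.rpow_nonneg (hlogn n) p))
    intro N
    have hsummand : ∀ n : ℕ, Summable
        (fun k' : ℕ => ‖a k'‖ ^ 2 * vv (n+1) k' / Real.log ((n:ℝ)+2) ^ p) := fun n =>
      (hbvv n).div_const _
    calc ∑ n ∈ Finset.range N, ‖xiSeq a (n+1)‖ / Real.log ((n:ℝ)+2) ^ p
        ≤ ∑ n ∈ Finset.range N,
            (∑' k', ‖a k'‖ ^ 2 * vv (n+1) k') / Real.log ((n:ℝ)+2) ^ p :=
          Finset.sum_le_sum fun n _ => div_le_div_of_nonneg_right (hT n) (hLpos n).le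
      _ = ∑ n ∈ Finset.range N,
            ∑' k', ‖a k'‖ ^ 2 * vv (n+1) k' / Real.log ((n:ℝ)+2) ^ p := by
          exact Finset.sum_congr rfl fun n _ => (tsum_div_const).symm
      _ = ∑' k', ∑ n ∈ Finset.range N,
            ‖a k'‖ ^ 2 * vv (n+1) k' / Real.log ((n:ℝ)+2) ^ p :=
          (Summable.tsum_finsetSum (fun n _ => hsummand n)).symm
      _ ≤ ∑' k', ‖a k'‖ ^ 2 * K := by
          refine Summable.tsum_le_tsum ?_ (summable_sum (fun n _ => hsummand n)) (ha.mul_right K)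
          intro k'
          have e : ∀ n : ℕ, ‖a k'‖ ^ 2 * vv (n+1) k' / Real.log ((n:ℝ)+2) ^ p
              = ‖a k'‖ ^ 2 * (vv (n+1) k' / Real.log ((n:ℝ)+2) ^ p) := fun n => by ring
          calc ∑ n ∈ Finset.range N, ‖a k'‖ ^ 2 * vv (n+1) k' / Real.log ((n:ℝ)+2) ^ p
              = ‖a k'‖ ^ 2 * ∑ n ∈ Finset.range N,
                  (vv (n+1) k' / Real.log ((n:ℝ)+2) ^ p) := by
                rw [Finset.mul_sum]
                exact Finset.sum_congr rfl fun n _ => e n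
            _ ≤ ‖a k'‖ ^ 2 * K := mul_le_mul_of_nonneg_left (hK k' N) (hb0 k')
      _ = (∑' k', ‖a k'‖ ^ 2) * K := tsum_mul_right
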